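/- arXiv:2510.02386 — 2 statements merged into one kernel-verified Lean document; each statement's English description precedes it below -/
import Mathlib

section
/- In the tabular softmax trajectory model, fix logits z : 𝒮 × 𝒜 → ℝ, a direction v : 𝒮 × 𝒜 → ℝ, and a nonempty event E ⊆ 𝒜^T. Then the function η ↦ E_{P_{z+ηv}}[ℓ_{z+ηv} | E] is differentiable at η = 0, with derivative equal to −E_{P_z}[(1/T)·Ψ_{z,v} | E] + Cov_{P_z(·|E)}(ℓ_z, Ψ_{z,v}). -/
open Finset Filter Asymptotics

noncomputable section

/-- Softmax policy: probability of action `a` in state `s` under logits `z`. -/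
def pol {S A : Type*} [Fintype A] (z : S × A → ℝ) (s : S) (a : A) : ℝ :=
  Real.exp (z (s, a)) / ∑ b : A, Real.exp (z (s, b))

/-- State reached after `n` steps of the deterministic dynamics `δ` from `s0`,
taking actions `y 0, y 1, …`. -/
def stateAt {S A : Type*} (δ : S → A → S) (s0 : S) (y : ℕ → A) : ℕ → S
  | 0 => s0
  | n + 1 => δ (stateAt δ s0 y n) (y n)

/-- State `s_t(y)` from which the `t`-th action of the trajectory `y` is taken. -/
def st {S A : Type*} (δ : S → A → S) (s0 : S) {T : ℕ} (y : Fin T → A) (t : Fin T) : S :=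
  stateAt δ s0 (fun n => if h : n < T then y ⟨n, h⟩ else y t) t.val

/-- Trajectory probability `P_z(y) = ∏_t π_z(a_t | s_t(y))`. -/
def traj {S A : Type*} [Fintype A] (δ : S → A → S) (s0 : S) {T : ℕ}
    (z : S × A → ℝ) (y : Fin T → A) : ℝ :=
  ∏ t : Fin T, pol z (st δ s0 y t) (y t)

/-- Per-token negative log-likelihood `ℓ_z(y)`. -/
def nll {S A : Type*} [Fintype A] (δ : S → A → S) (s0 : S) {T : ℕ}
    (z : S × A → ℝ) (y : Fin T → A) : ℝ :=
  -(1 / (T : ℝ)) * ∑ t : Fin T, Real.log (pol z (st δ s0 y t) (y t))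

/-- Centered direction `ṽ_z(s,a) = v(s,a) − ∑_b π_z(b|s) v(s,b)`. -/
def centered {S A : Type*} [Fintype A] (z v : S × A → ℝ) (s : S) (a : A) : ℝ :=
  v (s, a) - ∑ b : A, pol z s b * v (s, b)

/-- Trajectory score `Ψ_{z,v}(y) = ∑_t ṽ_z(s_t(y), a_t)`. -/
def score {S A : Type*} [Fintype A] (δ : S → A → S) (s0 : S) {T : ℕ}
    (z v : S × A → ℝ) (y : Fin T → A) : ℝ :=
  ∑ t : Fin T, centered z v (st δ s0 y t) (y t)

/-- Conditional expectation `E_{P_z}[f | E]`. -/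
def condExp {S A : Type*} [Fintype A] (δ : S → A → S) (s0 : S) {T : ℕ}
    (z : S × A → ℝ) (E : Finset (Fin T → A)) (f : (Fin T → A) → ℝ) : ℝ :=
  (∑ y ∈ E, traj δ s0 z y * f y) / ∑ y ∈ E, traj δ s0 z y

/-- Conditional covariance `Cov_{P_z(·|E)}(f, g)`. -/
def condCov {S A : Type*} [Fintype A] (δ : S → A → S) (s0 : S) {T : ℕ}
    (z : S × A → ℝ) (E : Finset (Fin T → A)) (f g : (Fin T → A) → ℝ) : ℝ :=
  condExp δ s0 z E (fun y => f y * g y) - condExp δ s0 z E f * condExp δ s0 z E g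

/-! The log-softmax `log π_{z+ηv}(a|s) = z(s,a) + η v(s,a) - log Σ_b exp (z(s,b) + η v(s,b))` has
η-derivative `ṽ_z(s,a)` at `0`, so `log P_{z+ηv}(y)` has derivative `Ψ_{z,v}(y)` and `ℓ_{z+ηv}(y)` has
derivative `-Ψ_{z,v}(y)/T`. Because the weights satisfy `P' = P Ψ`, the quotient rule for the
self-normalised average `Σ_E P ℓ / Σ_E P` produces `E[ℓ' | E] + Cov(ℓ, Ψ | E)`. -/

section Softmax

variable {S A : Type*} [Fintype A]

lemma sum_pol_mul (z v : S × A → ℝ) (s : S) :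
    ∑ b : A, pol z s b * v (s, b)
      = (∑ b : A, Real.exp (z (s, b)) * v (s, b)) / ∑ b : A, Real.exp (z (s, b)) := by
  rw [sum_div]
  exact sum_congr rfl fun b _ => by rw [pol]; ring

variable [Nonempty A]

lemma sum_exp_pos (z : S × A → ℝ) (s : S) : 0 < ∑ b : A, Real.exp (z (s, b)) :=
  sum_pos (fun _ _ => Real.exp_pos _) univ_nonempty

lemma pol_pos (z : S × A → ℝ) (s : S) (a : A) : 0 < pol z s a :=
  div_pos (Real.exp_pos _) (sum_exp_pos z s)

lemma log_pol (z : S × A → ℝ) (s : S) (a : A) :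
    Real.log (pol z s a) = z (s, a) - Real.log (∑ b : A, Real.exp (z (s, b))) := by
  rw [pol, Real.log_div (Real.exp_pos _).ne' (sum_exp_pos z s).ne', Real.log_exp]

lemma hasDerivAt_log_pol (z v : S × A → ℝ) (s : S) (a : A) :
    HasDerivAt (fun η : ℝ => Real.log (pol (z + η • v) s a)) (centered z v s a) 0 := by
  have hline : ∀ c : A, HasDerivAt (fun η : ℝ => z (s, c) + η * v (s, c)) (v (s, c)) 0 := fun c =>
    by simpa using ((hasDerivAt_id (0 : ℝ)).mul_const (v (s, c))).const_add (z (s, c))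
  have hpartition : HasDerivAt (fun η : ℝ => ∑ b : A, Real.exp (z (s, b) + η * v (s, b)))
      (∑ b : A, Real.exp (z (s, b)) * v (s, b)) 0 :=
    HasDerivAt.fun_sum fun b _ => by simpa using (hline b).exp
  have hlog := (hline a).fun_sub (hpartition.log (by simpa using (sum_exp_pos z s).ne'))
  have hfun : (fun η : ℝ => Real.log (pol (z + η • v) s a)) = fun η : ℝ =>
      z (s, a) + η * v (s, a) - Real.log (∑ b : A, Real.exp (z (s, b) + η * v (s, b))) := by
    funext η
    simp [log_pol]
  rw [hfun, centered, sum_pol_mul]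
  simpa using hlog

variable {T : ℕ} (δ : S → A → S) (s0 : S)

lemma traj_pos (z : S × A → ℝ) (y : Fin T → A) : 0 < traj δ s0 z y :=
  prod_pos fun _ _ => pol_pos z _ _

lemma traj_eq_exp_sum_log (z : S × A → ℝ) (y : Fin T → A) :
    traj δ s0 z y = Real.exp (∑ t : Fin T, Real.log (pol z (st δ s0 y t) (y t))) := by
  rw [Real.exp_sum, traj]
  exact prod_congr rfl fun t _ => (Real.exp_log (pol_pos _ _ _)).symm

lemma hasDerivAt_sum_log_pol (z v : S × A → ℝ) (y : Fin T → A) :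
    HasDerivAt (fun η : ℝ => ∑ t : Fin T, Real.log (pol (z + η • v) (st δ s0 y t) (y t)))
      (score δ s0 z v y) 0 :=
  HasDerivAt.fun_sum fun _ _ => hasDerivAt_log_pol z v _ _

lemma hasDerivAt_traj (z v : S × A → ℝ) (y : Fin T → A) :
    HasDerivAt (fun η : ℝ => traj δ s0 (z + η • v) y) (traj δ s0 z y * score δ s0 z v y) 0 := by
  simp_rw [traj_eq_exp_sum_log δ s0 _ y]
  simpa using (hasDerivAt_sum_log_pol δ s0 z v y).exp

lemma hasDerivAt_nll (z v : S × A → ℝ) (y : Fin T → A) :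
    HasDerivAt (fun η : ℝ => nll δ s0 (z + η • v) y) (-(1 / (T : ℝ) * score δ s0 z v y)) 0 := by
  simpa [nll] using (hasDerivAt_sum_log_pol δ s0 z v y).const_mul (-(1 / (T : ℝ)))

end Softmax

lemma hasDerivAt_sum_mul_div_sum {ι : Type*} (E : Finset ι) {w f : ι → ℝ → ℝ} {ψ f' : ι → ℝ}
    {x : ℝ} (hw : ∀ i ∈ E, HasDerivAt (w i) (w i x * ψ i) x)
    (hf : ∀ i ∈ E, HasDerivAt (f i) (f' i) x) (hW : ∑ i ∈ E, w i x ≠ 0) :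
    HasDerivAt (fun η => (∑ i ∈ E, w i η * f i η) / ∑ i ∈ E, w i η)
      ((∑ i ∈ E, w i x * f' i) / ∑ i ∈ E, w i x
        + ((∑ i ∈ E, w i x * (f i x * ψ i)) / ∑ i ∈ E, w i x
          - (∑ i ∈ E, w i x * f i x) / (∑ i ∈ E, w i x)
            * ((∑ i ∈ E, w i x * ψ i) / ∑ i ∈ E, w i x))) x := by
  have hnum := HasDerivAt.fun_sum fun i hi => (hw i hi).fun_mul (hf i hi)
  refine (hnum.fun_div (HasDerivAt.fun_sum hw) hW).congr_deriv ?_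
  have hcomm : ∑ i ∈ E, w i x * ψ i * f i x = ∑ i ∈ E, w i x * (f i x * ψ i) :=
    sum_congr rfl fun i _ => by ring
  rw [sum_add_distrib, hcomm]
  field_simp
  ring

theorem stmt_1_general {S A : Type*} [Fintype A] [Nonempty A]
    (δ : S → A → S) (s0 : S) (T : ℕ)
    (z v : S × A → ℝ) (E : Finset (Fin T → A)) (hE : E.Nonempty) :
    HasDerivAt (fun η : ℝ => condExp δ s0 (z + η • v) E (nll δ s0 (z + η • v)))
      (-condExp δ s0 z E (fun y => (1 / (T : ℝ)) * score δ s0 z v y)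
        + condCov δ s0 z E (nll δ s0 z) (score δ s0 z v)) 0 := by
  have h := hasDerivAt_sum_mul_div_sum E (w := fun y η => traj δ s0 (z + η • v) y)
    (f := fun y η => nll δ s0 (z + η • v) y) (x := 0)
    (fun y _ => by simpa using hasDerivAt_traj δ s0 z v y)
    (fun y _ => hasDerivAt_nll δ s0 z v y)
    (by simpa using (sum_pos (fun y _ => traj_pos δ s0 z y) hE).ne')
  simp only [zero_smul, add_zero] at h
  refine h.congr_deriv ?_
  simp only [condCov, condExp, mul_neg, sum_neg_distrib, neg_div]

/-- **Theorem 1 (derivative form).** The function `η ↦ E_{P_{z+ηv}}[ℓ_{z+ηv} | E]` is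
differentiable at `η = 0`, with derivative
`−E_{P_z}[(1/T)·Ψ_{z,v} | E] + Cov_{P_z(·|E)}(ℓ_z, Ψ_{z,v})`. -/
theorem stmt_1 {S A : Type*} [Fintype S] [Fintype A] [Nonempty A]
    (δ : S → A → S) (s0 : S) (T : ℕ) (hT : 1 ≤ T)
    (z v : S × A → ℝ) (E : Finset (Fin T → A)) (hE : E.Nonempty) :
    HasDerivAt (fun η : ℝ => condExp δ s0 (z + η • v) E (nll δ s0 (z + η • v)))
      (-condExp δ s0 z E (fun y => (1 / (T : ℝ)) * score δ s0 z v y)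
        + condCov δ s0 z E (nll δ s0 z) (score δ s0 z v)) 0 :=
  stmt_1_general δ s0 T z v E hE
end
end

section
/- Let ε > 0, A ∈ ℝ, c > 0, and let π : ℝ → ℝ be differentiable at θ₀ with π(θ₀) > 0. Define ρ(θ) = π(θ)/c and clip_ε(x) = min(max(x, 1−ε), 1+ε), and assume ρ(θ₀) ≠ 1−ε and ρ(θ₀) ≠ 1+ε. Then the function θ ↦ min(ρ(θ)·A, clip_ε(ρ(θ))·A) is differentiable at θ₀ with derivative m·A·ρ(θ₀)·(derivative of log ∘ π at θ₀), where m = 0 if (A ≥ 0 and ρ(θ₀) > 1+ε) or (A ≤ 0 and ρ(θ₀) < 1−ε), and m = 1 otherwise. -/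
/-!
Write `ρ = π / c`. As a function of the ratio, the clipped objective is
`min ρ (1 + ε) · A` when `A ≥ 0` and `max ρ (1 - ε) · A` when `A ≤ 0`, so away from the
kinks `ρ = 1 ± ε` its derivative in `ρ` is `A` or `0`, and the mask records which. The chain
rule together with `ρ' = π' / c = ρ · (log ∘ π)'` gives the formula.
-/

noncomputable section

def clip (ε x : ℝ) : ℝ := min (max x (1 - ε)) (1 + ε)

def ppoObjective (ε A x : ℝ) : ℝ := min (x * A) (clip ε x * A)

def clipMask (ε A x : ℝ) : ℝ :=
  if (0 ≤ A ∧ 1 + ε < x) ∨ (A ≤ 0 ∧ x < 1 - ε) then 0 else 1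

theorem hasDerivAt_min_const {a x : ℝ} (h : x ≠ a) :
    HasDerivAt (fun y => min y a) (if a < x then 0 else 1) x := by
  rcases h.lt_or_gt with hx | hx
  · rw [if_neg hx.not_gt]
    exact (hasDerivAt_id x).congr_of_eventuallyEq
      ((eventually_lt_nhds hx).mono fun y hy => min_eq_left hy.le)
  · rw [if_pos hx]
    exact (hasDerivAt_const x a).congr_of_eventuallyEq
      ((eventually_gt_nhds hx).mono fun y hy => min_eq_right hy.le)

theorem hasDerivAt_max_const {a x : ℝ} (h : x ≠ a) :
    HasDerivAt (fun y => max y a) (if x < a then 0 else 1) x := by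
  rcases h.lt_or_gt with hx | hx
  · rw [if_pos hx]
    exact (hasDerivAt_const x a).congr_of_eventuallyEq
      ((eventually_lt_nhds hx).mono fun y hy => max_eq_right hy.le)
  · rw [if_neg hx.not_gt]
    exact (hasDerivAt_id x).congr_of_eventuallyEq
      ((eventually_gt_nhds hx).mono fun y hy => max_eq_left hy.le)

namespace ppoObjective

variable {ε A : ℝ}

theorem eq_min_mul (hA : 0 ≤ A) (x : ℝ) : ppoObjective ε A x = min x (1 + ε) * A := by
  rw [ppoObjective, ← min_mul_of_nonneg _ _ hA, clip, ← min_assoc,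
    min_eq_left (le_max_left x _)]

theorem eq_max_mul (hε : 0 ≤ ε) (hA : A ≤ 0) (x : ℝ) :
    ppoObjective ε A x = max x (1 - ε) * A := by
  have hanti : Antitone (· * A) := fun _ _ h => mul_le_mul_of_nonpos_right h hA
  rw [ppoObjective, ← hanti.map_max, clip, max_min_distrib_left, ← max_assoc, max_self,
    min_eq_left (max_le_max_left x (by linarith))]

theorem hasDerivAt (hε : 0 ≤ ε) {x : ℝ} (h₁ : x ≠ 1 - ε) (h₂ : x ≠ 1 + ε) :
    HasDerivAt (ppoObjective ε A) (clipMask ε A x * A) x := by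
  rcases le_total 0 A with hA | hA
  · have hmask : clipMask ε A x * A = (if 1 + ε < x then 0 else 1) * A := by
      rcases hA.eq_or_lt with rfl | hA
      · simp
      · simp [clipMask, hA.le, hA.not_ge]
    rw [funext (eq_min_mul hA), hmask]
    exact (hasDerivAt_min_const h₂).mul_const A
  · have hmask : clipMask ε A x * A = (if x < 1 - ε then 0 else 1) * A := by
      rcases hA.eq_or_lt with rfl | hA
      · simp
      · simp [clipMask, hA.le, hA.not_ge]
    rw [funext (eq_max_mul hε hA), hmask]
    exact (hasDerivAt_max_const h₁).mul_const A

end ppoObjective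

theorem stmt_12_general (ε A c : ℝ) (hε : 0 < ε)
    (π : ℝ → ℝ) (θ₀ : ℝ) (hπ : DifferentiableAt ℝ π θ₀) (hpos : 0 < π θ₀)
    (h1 : π θ₀ / c ≠ 1 - ε) (h2 : π θ₀ / c ≠ 1 + ε) :
    HasDerivAt (fun θ : ℝ => min ((π θ / c) * A) (clip ε (π θ / c) * A))
      ((if (0 ≤ A ∧ 1 + ε < π θ₀ / c) ∨ (A ≤ 0 ∧ π θ₀ / c < 1 - ε)
          then (0 : ℝ) else 1)
        * A * (π θ₀ / c) * deriv (fun θ => Real.log (π θ)) θ₀) θ₀ := by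
  have hρ : HasDerivAt (fun θ => π θ / c) (deriv π θ₀ / c) θ₀ := hπ.hasDerivAt.div_const c
  have hlog : π θ₀ / c * deriv (fun θ => Real.log (π θ)) θ₀ = deriv π θ₀ / c := by
    rw [deriv.log hπ hpos.ne', div_mul_div_comm, mul_comm c,
      mul_div_mul_left _ _ hpos.ne']
  rw [mul_assoc _ (π θ₀ / c), hlog]
  exact (ppoObjective.hasDerivAt hε.le h1 h2).comp θ₀ hρ

/-- Gradient of the PPO clipped term through the importance ratio `ρ(θ) = π(θ)/c`:
`d/dθ min(ρ(θ)·A, clip_ε(ρ(θ))·A) = m·A·ρ(θ₀)·(log ∘ π)'(θ₀)`, where the clipping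
mask `m` is `0` when the clip is active and `1` otherwise. -/
theorem stmt_12 (ε A c : ℝ) (hε : 0 < ε) (hc : 0 < c)
    (π : ℝ → ℝ) (θ₀ : ℝ) (hπ : DifferentiableAt ℝ π θ₀) (hpos : 0 < π θ₀)
    (h1 : π θ₀ / c ≠ 1 - ε) (h2 : π θ₀ / c ≠ 1 + ε) :
    HasDerivAt (fun θ : ℝ => min ((π θ / c) * A) (clip ε (π θ / c) * A))
      ((if (0 ≤ A ∧ 1 + ε < π θ₀ / c) ∨ (A ≤ 0 ∧ π θ₀ / c < 1 - ε)
          then (0 : ℝ) else 1)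
        * A * (π θ₀ / c) * deriv (fun θ => Real.log (π θ)) θ₀) θ₀ :=
  stmt_12_general ε A c hε π θ₀ hπ hpos h1 h2
end
end
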